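/- arXiv:2310.14046 — 3 statements merged into one kernel-verified Lean document; each statement's English description precedes it below -/
import Mathlib

section
/- Let V be a real inner product space, z ∈ V with ⟨z,z⟩ > 0, p ∈ [0,1], and let X₀, …, Xₙ ∈ V be pairwise p-uncorrelated with respect to z with var_p(Xₖ; z) > 0 for each k. Then for any Y ∈ V and any real constants α₀, …, αₙ: var_p(Y - Σₖ (cov_p(Xₖ,Y;z)/var_p(Xₖ;z))·Xₖ ; z) ≤ var_p(Y - Σₖ αₖ·Xₖ ; z). -/
/-!
For `p ≤ 1` the p-covariance is a positive semidefinite symmetric bilinear form (by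
Cauchy–Schwarz, `⟪x, z⟫² / ⟪z, z⟫ ≤ ⟪x, x⟫`). For such a form the error `e` of the Fourier
approximation is orthogonal to every `Xₖ`; any other combination leaves the error `e + d` with
`d` in the span of the `Xₖ`, and Pythagoras gives `var (e + d) = var e + var d ≥ var e`.
-/

open RealInnerProductSpace

/-- The p-covariance of `x` and `y` with respect to the fixed element `z`. -/
noncomputable def pCov {V : Type*} [NormedAddCommGroup V] [InnerProductSpace ℝ V]
    (p : ℝ) (z x y : V) : ℝ :=
  ⟪x, y⟫ - p * ⟪x, z⟫ * ⟪y, z⟫ / ⟪z, z⟫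

/-- The p-variance of `x` with respect to the fixed element `z`. -/
noncomputable def pVar {V : Type*} [NormedAddCommGroup V] [InnerProductSpace ℝ V]
    (p : ℝ) (z x : V) : ℝ :=
  pCov p z x x

namespace LinearMap.BilinForm

variable {𝕜 M ι : Type*} [Field 𝕜] [AddCommGroup M] [Module 𝕜 M] [Fintype ι]
  {B : LinearMap.BilinForm 𝕜 M} {v : ι → M}

theorem apply_sum_smul_of_iIsOrtho (hv : B.iIsOrtho v) (a : ι → 𝕜) (k : ι) :
    B (v k) (∑ j, a j • v j) = a k * B (v k) (v k) := by
  rw [sum_right, Finset.sum_eq_single k (fun j _ hjk => by rw [smul_right, hv hjk.symm, mul_zero])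
    (fun hk => absurd (Finset.mem_univ k) hk), smul_right]

theorem apply_sub_sum_fourier_eq_zero (hv : B.iIsOrtho v) (hvk : ∀ k, B (v k) (v k) ≠ 0)
    (y : M) (k : ι) :
    B (v k) (y - ∑ j, (B (v j) y / B (v j) (v j)) • v j) = 0 := by
  rw [sub_right, apply_sum_smul_of_iIsOrtho hv, div_mul_cancel₀ _ (hvk k), sub_self]

theorem apply_add_add_of_apply_eq_zero (hB : B.IsSymm) {x w : M} (hxw : B x w = 0) :
    B (x + w) (x + w) = B x x + B w w := by
  rw [add_left, add_right, add_right, hB.eq w x, hxw]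
  ring

variable [LinearOrder 𝕜] [IsStrictOrderedRing 𝕜]

theorem apply_sub_sum_fourier_le (hB : B.IsSymm) (hpos : ∀ x, 0 ≤ B x x) (hv : B.iIsOrtho v)
    (hvk : ∀ k, B (v k) (v k) ≠ 0) (y : M) (a : ι → 𝕜) :
    B (y - ∑ k, (B (v k) y / B (v k) (v k)) • v k) (y - ∑ k, (B (v k) y / B (v k) (v k)) • v k)
      ≤ B (y - ∑ k, a k • v k) (y - ∑ k, a k • v k) := by
  set e := y - ∑ k, (B (v k) y / B (v k) (v k)) • v k with he
  set d := ∑ k, (B (v k) y / B (v k) (v k) - a k) • v k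
  have hsplit : y - ∑ k, a k • v k = e + d := by
    simp only [e, d, sub_smul, Finset.sum_sub_distrib]
    abel
  have hed : B d e = 0 := by
    simp only [d, sum_left, smul_left, he, apply_sub_sum_fourier_eq_zero hv hvk, mul_zero,
      Finset.sum_const_zero]
  rw [hsplit, apply_add_add_of_apply_eq_zero hB ((hB.eq e d).trans hed)]
  exact le_add_of_nonneg_right (hpos d)

end LinearMap.BilinForm

section pCov

variable {V : Type*} [NormedAddCommGroup V] [InnerProductSpace ℝ V]

noncomputable def pCovForm (p : ℝ) (z : V) : LinearMap.BilinForm ℝ V :=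
  LinearMap.mk₂ ℝ (pCov p z)
    (fun x x' y => by simp only [pCov, inner_add_left]; ring)
    (fun c x y => by simp only [pCov, real_inner_smul_left, smul_eq_mul]; ring)
    (fun x y y' => by simp only [pCov, inner_add_left, inner_add_right]; ring)
    (fun c x y => by
      simp only [pCov, real_inner_smul_left, real_inner_smul_right, smul_eq_mul]; ring)

@[simp]
theorem pCovForm_apply (p : ℝ) (z x y : V) : pCovForm p z x y = pCov p z x y := rfl

theorem pCovForm_isSymm (p : ℝ) (z : V) : (pCovForm p z).IsSymm :=
  ⟨fun x y => by simp only [pCovForm_apply, pCov, real_inner_comm x y]; ring⟩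

theorem pVar_nonneg {p : ℝ} (hp : p ≤ 1) (z x : V) : 0 ≤ pVar p z x := by
  set s := ⟪x, z⟫ * ⟪x, z⟫ / ⟪z, z⟫
  have hs_le : s ≤ ⟪x, x⟫ :=
    div_le_of_le_mul₀ real_inner_self_nonneg real_inner_self_nonneg
      (real_inner_mul_inner_self_le x z)
  have hs_nonneg : 0 ≤ s := div_nonneg (mul_self_nonneg _) real_inner_self_nonneg
  have hexpand : pVar p z x = ⟪x, x⟫ - p * s := by
    simp only [pVar, pCov, s]
    ring
  linarith [mul_le_of_le_one_left hs_nonneg hp]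

end pCov

theorem pVar_best_approximation_general
    {V : Type*} [NormedAddCommGroup V] [InnerProductSpace ℝ V]
    (z : V)
    (p : ℝ) (hp1 : p ≤ 1)
    (n : ℕ) (X : Fin (n + 1) → V)
    (huncorr : ∀ i j, i ≠ j → pCov p z (X i) (X j) = 0)
    (hvar : ∀ k, 0 < pVar p z (X k))
    (Y : V) (α : Fin (n + 1) → ℝ) :
    pVar p z (Y - ∑ k, (pCov p z (X k) Y / pVar p z (X k)) • X k)
      ≤ pVar p z (Y - ∑ k, α k • X k) :=
  LinearMap.BilinForm.apply_sub_sum_fourier_le (pCovForm_isSymm p z) (pVar_nonneg hp1 z) huncorr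
    (fun k => (hvar k).ne') Y α

theorem pVar_best_approximation
    {V : Type*} [NormedAddCommGroup V] [InnerProductSpace ℝ V]
    (z : V) (hz : (0:ℝ) < ⟪z, z⟫)
    (p : ℝ) (hp0 : 0 ≤ p) (hp1 : p ≤ 1)
    (n : ℕ) (X : Fin (n + 1) → V)
    (huncorr : ∀ i j, i ≠ j → pCov p z (X i) (X j) = 0)
    (hvar : ∀ k, 0 < pVar p z (X k))
    (Y : V) (α : Fin (n + 1) → ℝ) :
    pVar p z (Y - ∑ k, (pCov p z (X k) Y / pVar p z (X k)) • X k)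
      ≤ pVar p z (Y - ∑ k, α k • X k) :=
  pVar_best_approximation_general z p hp1 n X huncorr hvar Y α
end

section
/- Let V be a real inner product space, z ∈ V with ⟨z,z⟩ > 0, p ∈ [0,1], and V₀, …, Vₙ ∈ V linearly independent. Define recursively X₀ = V₀ and Xₖ = Vₖ - Σ_{j<k} (cov_p(Xⱼ,Vₖ;z)/var_p(Xⱼ;z))·Xⱼ, assuming var_p(Xⱼ;z) > 0 at each step. Then cov_p(Xₙ, Xⱼ; z) = 0 for all j < n, i.e., the X's are pairwise p-uncorrelated with respect to z. -/
open RealInnerProductSpace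

section aux

variable {V : Type*} [NormedAddCommGroup V] [InnerProductSpace ℝ V]
  (p : ℝ) (z : V)

lemma pCov_comm (x y : V) : pCov p z x y = pCov p z y x := by
  simp only [pCov, real_inner_comm x y]; ring

lemma pCov_sub_left (x y w : V) :
    pCov p z (x - y) w = pCov p z x w - pCov p z y w := by
  simp only [pCov, inner_sub_left]; ring

lemma pCov_add_left (x y w : V) :
    pCov p z (x + y) w = pCov p z x w + pCov p z y w := by
  simp only [pCov, inner_add_left]; ring

lemma pCov_smul_left (a : ℝ) (x w : V) :
    pCov p z (a • x) w = a * pCov p z x w := by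
  simp only [pCov, real_inner_smul_left]; ring

lemma pCov_sum_left (s : Finset ℕ) (f : ℕ → V) (w : V) :
    pCov p z (∑ i ∈ s, f i) w = ∑ i ∈ s, pCov p z (f i) w := by
  classical
  induction s using Finset.induction with
  | empty => simp [pCov]
  | insert _ _ h ih =>
    rw [Finset.sum_insert h, Finset.sum_insert h, pCov_add_left, ih]

end aux

theorem gramSchmidt_pUncorrelated
    {V : Type*} [NormedAddCommGroup V] [InnerProductSpace ℝ V]
    (z : V) (hz : (0:ℝ) < ⟪z, z⟫)
    (p : ℝ) (hp0 : 0 ≤ p) (hp1 : p ≤ 1)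
    (n : ℕ) (Vv : ℕ → V)
    (hind : LinearIndependent ℝ (fun i : Fin (n + 1) => Vv i))
    (X : ℕ → V)
    (hX0 : X 0 = Vv 0)
    (hXrec : ∀ k, 1 ≤ k → k ≤ n →
      X k = Vv k - ∑ j ∈ Finset.range k, (pCov p z (X j) (Vv k) / pVar p z (X j)) • X j)
    (hvar : ∀ j, j < n → 0 < pVar p z (X j)) :
    ∀ j, j < n → pCov p z (X n) (X j) = 0 := by
  have key : ∀ k, k ≤ n → ∀ j, j < k → pCov p z (X k) (X j) = 0 := by
    intro k
    induction k using Nat.strong_induction_on with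
    | _ k ih =>
      intro hk j hj
      rw [hXrec k (by omega) hk, pCov_sub_left, pCov_sum_left]
      have hsum : ∑ i ∈ Finset.range k,
          pCov p z ((pCov p z (X i) (Vv k) / pVar p z (X i)) • X i) (X j)
          = pCov p z (X j) (Vv k) := by
        rw [Finset.sum_eq_single j]
        · rw [pCov_smul_left]
          have hne : pVar p z (X j) ≠ 0 := (hvar j (lt_of_lt_of_le hj hk)).ne'
          rw [show pCov p z (X j) (X j) = pVar p z (X j) from rfl]
          field_simp
        · intro i hi hij
          rw [pCov_smul_left]
          have hik : i < k := Finset.mem_range.mp hi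
          rcases lt_or_gt_of_ne hij with h | h
          · rw [pCov_comm p z (X i) (X j), ih j hj (le_trans (le_of_lt hj) hk) i h, mul_zero]
          · rw [ih i hik (le_trans (le_of_lt hik) hk) j h, mul_zero]
        · intro h; exact absurd (Finset.mem_range.mpr hj) h
      rw [hsum, pCov_comm p z (Vv k), sub_self]
  exact fun j hj => key n le_rfl j hj
end

section
/- For every nonnegative integer n and real r with 2r+1 > 0, r ≠ 0: the 3F2 evaluation ₃F₂(-n, n+2r+1, r; 2r+1, r+1; 1) = n!/(2r+1)_n holds, where (a)_n is the Pochhammer symbol. -/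
/-- The Pochhammer symbol (rising factorial) `(a)_k = a (a+1) ⋯ (a+k-1)` for a real `a`. -/
noncomputable def poch (a : ℝ) (k : ℕ) : ℝ :=
  Polynomial.eval a (ascPochhammer ℝ k)

open Polynomial Finset

lemma poch_succ (a : ℝ) (m : ℕ) : poch a (m+1) = poch a m * (a + m) :=
  ascPochhammer_succ_eval m a

lemma poch_eq_prod (a : ℝ) (m : ℕ) : poch a m = ∏ j ∈ range m, (a + j) := by
  induction m with
  | zero => simp [poch]
  | succ m ih => rw [poch_succ, ih, prod_range_succ]

lemma poch_ne_zero {a : ℝ} {m : ℕ} (h : ∀ j < m, a + j ≠ 0) : poch a m ≠ 0 := by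
  rw [poch_eq_prod]
  exact Finset.prod_ne_zero_iff.mpr (fun j hj => h j (mem_range.mp hj))

lemma poch_pos {a : ℝ} (ha : 0 < a) (m : ℕ) : 0 < poch a m := ascPochhammer_pos m a ha

lemma poch_succ_left (a : ℝ) (m : ℕ) : poch a (m+1) = a * poch (a+1) m := by
  rw [poch_eq_prod, poch_eq_prod, Finset.prod_range_succ', mul_comm]
  push_cast
  rw [add_zero]
  congr 1
  exact Finset.prod_congr rfl fun j _ => by ring

lemma poch_add (a : ℝ) (m k : ℕ) : poch a (m + k) = poch a m * poch (a + m) k := by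
  induction k with
  | zero => simp [poch]
  | succ k ih =>
    rw [← add_assoc, poch_succ, ih, poch_succ]
    push_cast
    ring

lemma poch_neg_nat (n k : ℕ) :
    poch (-(n:ℝ)) k = (-1)^k * (k.factorial * (n.choose k)) := by
  rw [poch, ascPochhammer_eval_neg_eq_descPochhammer,
    descPochhammer_eval_eq_descFactorial, Nat.descFactorial_eq_factorial_mul_choose]
  push_cast
  ring

lemma alt_step (f : ℕ → ℝ) (n : ℕ) :
    ∑ k ∈ range (n+2), (-1:ℝ)^k * ((n+1).choose k) * f k
      = ∑ k ∈ range (n+1), (-1:ℝ)^k * (n.choose k) * (f k - f (k+1)) := by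
  have h2 : ∑ k ∈ range (n+1), (-1:ℝ)^(k+1) * (n.choose (k+1)) * f (k+1)
      = ∑ k ∈ range (n+1), (-1:ℝ)^k * (n.choose k) * f k - f 0 := by
    have e1 := Finset.sum_range_succ' (fun k => (-1:ℝ)^k * (n.choose k) * f k) (n+1)
    have e2 := Finset.sum_range_succ (fun k => (-1:ℝ)^k * (n.choose k) * f k) (n+1)
    simp only [Nat.choose_self, Nat.choose_zero_right, Nat.cast_one, pow_zero, one_mul,
      Nat.choose_succ_self, Nat.cast_zero, mul_zero, zero_mul, add_zero] at e1 e2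
    rw [e2] at e1
    linarith [e1]
  rw [Finset.sum_range_succ' (fun k => (-1:ℝ)^k * ((n+1).choose k) * f k) (n+1)]
  simp only [Nat.choose_succ_succ, Nat.choose_zero_right, Nat.cast_one, pow_zero, one_mul,
    Nat.cast_add]
  have h3 : ∑ k ∈ range (n+1), (-1:ℝ)^(k+1) * ((n.choose k : ℝ) + (n.choose (k+1))) * f (k+1)
      = -(∑ k ∈ range (n+1), (-1:ℝ)^k * (n.choose k) * f (k+1))
        + ∑ k ∈ range (n+1), (-1:ℝ)^(k+1) * (n.choose (k+1)) * f (k+1) := by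
    rw [← Finset.sum_neg_distrib, ← Finset.sum_add_distrib]
    exact Finset.sum_congr rfl fun k _ => by ring
  rw [h3, h2]
  have e3 : ∑ k ∈ range (n+1), (-1:ℝ)^k * (n.choose k) * (f k - f (k+1))
      = ∑ k ∈ range (n+1), (-1:ℝ)^k * (n.choose k) * f k
        - ∑ k ∈ range (n+1), (-1:ℝ)^k * (n.choose k) * f (k+1) := by
    rw [← Finset.sum_sub_distrib]
    exact Finset.sum_congr rfl fun k _ => by ring
  rw [e3]
  ring

lemma alt_sum_poly (n : ℕ) : ∀ p : ℝ[X], p.degree < n →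
    ∑ k ∈ range (n+1), (-1:ℝ)^k * (n.choose k) * p.eval (k : ℝ) = 0 := by
  induction n with
  | zero =>
    intro p hp
    have hp0 : p = 0 := by
      rw [← Polynomial.degree_eq_bot, ← Nat.WithBot.lt_zero_iff]
      exact_mod_cast hp
    simp [hp0]
  | succ n ih =>
    intro p hp
    have hterm : ∀ k : ℕ, p.eval (k:ℝ) - p.eval ((k+1 : ℕ):ℝ)
        = (p - p.comp (X + 1)).eval (k:ℝ) := by
      intro k
      rw [Polynomial.eval_sub, Polynomial.eval_comp]
      push_cast
      simp
    have hstep := alt_step (fun k => p.eval (k:ℝ)) n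
    rw [show n+1+1 = n+2 from rfl, hstep,
      Finset.sum_congr rfl fun k _ => by rw [hterm k]]
    refine ih (p - p.comp (X+1)) ?_
    by_cases hp0 : p = 0
    · rw [hp0]
      simp only [Polynomial.zero_comp, sub_zero, Polynomial.degree_zero]
      exact bot_lt_iff_ne_bot.mpr (by simp)
    · have hlc : p.leadingCoeff = (p.comp (X + 1)).leadingCoeff := by
        rw [show (X + 1 : ℝ[X]) = X + C 1 by simp, Polynomial.leadingCoeff_comp (by
          rw [Polynomial.natDegree_X_add_C]; exact one_ne_zero),
          Polynomial.leadingCoeff_X_add_C, one_pow, mul_one]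
      have hcomp0 : p.comp (X + 1) ≠ 0 := by
        intro h
        apply hp0
        rw [← Polynomial.leadingCoeff_eq_zero, hlc, h, Polynomial.leadingCoeff_zero]
      have hdc : (p.comp (X + 1)).degree = p.degree := by
        rw [Polynomial.degree_eq_natDegree hcomp0, Polynomial.degree_eq_natDegree hp0,
          Polynomial.natDegree_comp, show (X + 1 : ℝ[X]) = X + C 1 by simp,
          Polynomial.natDegree_X_add_C, mul_one]
      calc (p - p.comp (X+1)).degree < p.degree :=
            Polynomial.degree_sub_lt hdc.symm hp0 hlc
        _ ≤ (n : WithBot ℕ) := by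
          have h1 : p.natDegree < n + 1 := by
            rwa [Polynomial.natDegree_lt_iff_degree_lt hp0]
          exact le_trans Polynomial.degree_le_natDegree
            (by exact_mod_cast Nat.lt_succ_iff.mp h1)

lemma alt_sum_inv (n : ℕ) : ∀ x : ℝ, (∀ k : ℕ, k ≤ n → x + k ≠ 0) →
    ∑ k ∈ range (n+1), (-1:ℝ)^k * (n.choose k) * (1 / (x + k))
      = n.factorial / poch x (n+1) := by
  induction n with
  | zero =>
    intro x hx
    have h0 : x ≠ 0 := by simpa using hx 0 le_rfl
    simp [poch_succ_left, poch]
  | succ n ih =>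
    intro x hx
    have hstep := alt_step (fun k => 1 / (x + k)) n
    rw [show n+1+1 = n+2 from rfl, hstep]
    have hterm : ∀ k : ℕ, (1 / (x + k) - 1 / (x + ((k+1:ℕ):ℝ)))
        = 1 / (x + k) - 1 / ((x+1) + k) := by
      intro k; push_cast; ring_nf
    rw [Finset.sum_congr rfl fun k _ => by rw [hterm k]]
    have hsub : ∑ k ∈ range (n+1), (-1:ℝ)^k * (n.choose k) * (1/(x+k) - 1/((x+1)+k))
        = ∑ k ∈ range (n+1), (-1:ℝ)^k * (n.choose k) * (1/(x+k))
          - ∑ k ∈ range (n+1), (-1:ℝ)^k * (n.choose k) * (1/((x+1)+k)) := by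
      rw [← Finset.sum_sub_distrib]
      exact Finset.sum_congr rfl fun k _ => by ring
    have hx1 : ∀ k : ℕ, k ≤ n → x + k ≠ 0 := fun k hk => hx k (le_trans hk (Nat.le_succ n))
    have hx2 : ∀ k : ℕ, k ≤ n → (x+1) + k ≠ 0 := by
      intro k hk
      have := hx (k+1) (by omega)
      push_cast at this ⊢
      intro h; exact this (by linarith)
    rw [hsub, ih x hx1, ih (x+1) hx2]
    have hP : poch x (n+1) ≠ 0 := poch_ne_zero (fun j hj => hx j (by omega))
    have hR : poch (x+1) n ≠ 0 := poch_ne_zero (fun j hj => by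
      have := hx (j+1) (by omega); push_cast at this ⊢; intro h; exact this (by linarith))
    have hx1n : (x + 1 + (n:ℝ)) ≠ 0 := by
      have := hx (n+1) le_rfl; push_cast at this; intro h; exact this (by linarith)
    have h0 : x ≠ 0 := by simpa using hx 0 (by omega)
    rw [poch_succ x (n+1), poch_succ (x+1) n, poch_succ_left x n]
    rw [Nat.factorial_succ]
    push_cast
    rw [div_sub_div _ _ (by exact mul_ne_zero h0 hR) (by exact mul_ne_zero hR hx1n),
      div_eq_div_iff (by exact mul_ne_zero (mul_ne_zero h0 hR) (mul_ne_zero hR hx1n))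
        (mul_ne_zero (mul_ne_zero h0 hR) (fun hzero => hx1n (by linarith)))]
    ring

theorem hypergeometric_3F2_saalschutz_eval
    (n : ℕ) (r : ℝ) (hr : 0 < 2 * r + 1) (hr0 : r ≠ 0) :
    ∑ k ∈ Finset.range (n + 1),
        (poch (-(n : ℝ)) k * poch ((n : ℝ) + 2 * r + 1) k * poch r k) /
          (poch (2 * r + 1) k * poch (r + 1) k * (Nat.factorial k : ℝ)) =
      (Nat.factorial n : ℝ) / poch (2 * r + 1) n := by
  have hrk : ∀ k : ℕ, r + (k:ℝ) ≠ 0 := by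
    intro k
    cases k with
    | zero => simpa using hr0
    | succ k =>
      have hk0 : (0:ℝ) ≤ (k:ℝ) := Nat.cast_nonneg k
      push_cast
      intro h
      nlinarith
  have hD : poch (2*r+1) n ≠ 0 := (poch_pos hr n).ne'
  set c : ℝ := poch r (n+1) with hc_def
  have hc : c ≠ 0 := poch_ne_zero (fun j _ => hrk j)
  set p : Polynomial ℝ := Polynomial.C r * ∏ j ∈ range n, (X + Polynomial.C (2*r+1+j))
    with hp_def
  have hp_eval : ∀ x : ℝ, p.eval x = r * poch (2*r+1+x) n := by
    intro x
    rw [hp_def, poch_eq_prod]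
    simp only [Polynomial.eval_mul, Polynomial.eval_C, Polynomial.eval_prod,
      Polynomial.eval_add, Polynomial.eval_X]
    congr 1
    exact Finset.prod_congr rfl fun j _ => by ring
  have hroot : (p - Polynomial.C c).eval (-r) = 0 := by
    rw [Polynomial.eval_sub, Polynomial.eval_C, hp_eval,
      show 2*r+1+(-r) = r+1 by ring, hc_def, poch_succ_left]
    ring
  obtain ⟨q, hq⟩ : X - Polynomial.C (-r) ∣ p - Polynomial.C c :=
    Polynomial.dvd_iff_isRoot.mpr hroot
  have hq_eval : ∀ x : ℝ, p.eval x = (x + r) * q.eval x + c := by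
    intro x
    have h := congrArg (Polynomial.eval x) hq
    simp only [Polynomial.eval_sub, Polynomial.eval_mul, Polynomial.eval_X,
      Polynomial.eval_C] at h
    linear_combination h
  have hqdeg : q.degree < (n : WithBot ℕ) := by
    by_cases hq0 : q = 0
    · rw [hq0, Polynomial.degree_zero]
      exact bot_lt_iff_ne_bot.mpr (by simp)
    · have hpcn : p.natDegree ≤ n := by
        refine le_trans (Polynomial.natDegree_mul_le) ?_
        rw [Polynomial.natDegree_C, zero_add]
        refine le_trans (Polynomial.natDegree_prod_le _ _) ?_
        refine le_trans (Finset.sum_le_card_nsmul _ _ 1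
          (fun j _ => le_of_eq (Polynomial.natDegree_X_add_C _))) ?_
        simp
      have hsubn : (p - Polynomial.C c).natDegree ≤ n :=
        le_trans (Polynomial.natDegree_sub_le _ _)
          (by rw [Polynomial.natDegree_C]; omega)
      have hsub0 : p - Polynomial.C c ≠ 0 := by
        intro h
        rw [h] at hq
        exact hq0 (by
          rcases mul_eq_zero.mp hq.symm with h1 | h1
          · exact absurd h1 (Polynomial.X_sub_C_ne_zero (-r))
          · exact h1)
      have hdeg_eq : (1 : WithBot ℕ) + q.degree = (p - Polynomial.C c).degree := by
        rw [hq, Polynomial.degree_mul, Polynomial.degree_X_sub_C]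
      have hqd : (q.natDegree : WithBot ℕ) = q.degree :=
        (Polynomial.degree_eq_natDegree hq0).symm
      have hle : (1 + q.natDegree : ℕ) ≤ n := by
        have := hdeg_eq
        rw [← hqd] at this
        have h2 : ((1 + q.natDegree : ℕ) : WithBot ℕ) ≤ (n : WithBot ℕ) := by
          rw [Nat.cast_add, Nat.cast_one, this]
          exact le_trans (Polynomial.degree_le_natDegree) (by exact_mod_cast hsubn)
        exact_mod_cast h2
      rw [← hqd]
      exact_mod_cast (by omega : q.natDegree < n)
  have key : ∀ k ∈ range (n+1),
      (poch (-(n : ℝ)) k * poch ((n : ℝ) + 2 * r + 1) k * poch r k) /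
          (poch (2 * r + 1) k * poch (r + 1) k * (Nat.factorial k : ℝ)) * poch (2*r+1) n
      = (-1:ℝ)^k * (n.choose k) * q.eval (k:ℝ)
        + c * ((-1:ℝ)^k * (n.choose k) * (1 / (r + k))) := by
    intro k hk
    have ha : poch (2*r+1) k ≠ 0 := (poch_pos hr k).ne'
    have hb : poch (r+1) k ≠ 0 := (poch_pos (by linarith) k).ne'
    have hkf : (k.factorial : ℝ) ≠ 0 := Nat.cast_ne_zero.mpr k.factorial_ne_zero
    have f2 : ((n:ℝ) + 2*r+1) = 2*r+1+(n:ℝ) := by ring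
    have f3 : poch (2*r+1) n * poch (2*r+1+(n:ℝ)) k
        = poch (2*r+1) k * poch (2*r+1+(k:ℝ)) n := by
      rw [← poch_add, ← poch_add, Nat.add_comm]
    have f4 : poch r k * (r + k) = r * poch (r+1) k := by
      rw [← poch_succ, poch_succ_left]
    have f5 : r * poch (2*r+1+(k:ℝ)) n = ((k:ℝ) + r) * q.eval (k:ℝ) + c := by
      rw [← hp_eval, hq_eval]
    rw [poch_neg_nat, f2]
    have hrkk := hrk k
    field_simp
    linear_combination ((n.choose k : ℝ)) *
      ((poch r k * (r+(k:ℝ))) * f3 + (poch (2*r+1) k * poch (2*r+1+(k:ℝ)) n) * f4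
        + (poch (2*r+1) k * poch (r+1) k) * f5)
  rw [eq_div_iff hD, Finset.sum_mul, Finset.sum_congr rfl key, Finset.sum_add_distrib,
    alt_sum_poly n q hqdeg, ← Finset.mul_sum, alt_sum_inv n r (fun k _ => hrk k), zero_add,
    ← hc_def, mul_div_cancel₀ _ hc]
end
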